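/- Let u and v be nonempty finite words over a totally ordered alphabet. Then u^ω < v^ω in the lexicographic order on infinite words if and only if uv < vu in the lexicographic order on finite words. -/
import Mathlib

set_option linter.unusedSectionVars false

variable {A : Type*} [LinearOrder A] [Inhabited A]

/-- The infinite periodic word `u^ω = uuu⋯`, as a function `ℕ → A`. -/
def omegaPow (u : List A) : ℕ → A := fun n => u.getD (n % u.length) default

/-- Lexicographic order on infinite words: `s < t` iff at the first position where
they differ, `s` has the smaller letter. -/
def lexLt (s t : ℕ → A) : Prop := ∃ k, (∀ i < k, s i = t i) ∧ s k < t k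

namespace OmegaPowAux

/-- Prepend a finite word to an infinite word. -/
def pre (w : List A) (s : ℕ → A) : ℕ → A :=
  fun n => if n < w.length then w.getD n default else s (n - w.length)

theorem lexLt_irrefl (s : ℕ → A) : ¬ lexLt s s := by
  rintro ⟨k, -, hk⟩
  exact lt_irrefl _ hk

theorem lexLt_trans {s t r : ℕ → A} (h1 : lexLt s t) (h2 : lexLt t r) : lexLt s r := by
  obtain ⟨k1, a1, b1⟩ := h1
  obtain ⟨k2, a2, b2⟩ := h2
  rcases lt_trichotomy k1 k2 with h | h | h
  · exact ⟨k1, fun i hi => (a1 i hi).trans (a2 i (hi.trans h)),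
      lt_of_lt_of_eq b1 (a2 k1 h)⟩
  · subst h
    exact ⟨k1, fun i hi => (a1 i hi).trans (a2 i hi), b1.trans b2⟩
  · exact ⟨k2, fun i hi => (a1 i (hi.trans h)).trans (a2 i hi),
      lt_of_eq_of_lt (a1 k2 h) b2⟩

theorem lexLt_asymm {s t : ℕ → A} (h1 : lexLt s t) (h2 : lexLt t s) : False :=
  lexLt_irrefl s (lexLt_trans h1 h2)

theorem lexLt_total_of_ne {s t : ℕ → A} (h : s ≠ t) : lexLt s t ∨ lexLt t s := by
  have hex : ∃ k, s k ≠ t k := by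
    by_contra hc
    push_neg at hc
    exact h (funext hc)
  classical
  set k := Nat.find hex with hk
  have hmin : ∀ i < k, s i = t i := fun i hi => not_not.mp (Nat.find_min hex hi)
  rcases lt_or_gt_of_ne (Nat.find_spec hex) with hlt | hgt
  · exact Or.inl ⟨k, hmin, hlt⟩
  · exact Or.inr ⟨k, fun i hi => (hmin i hi).symm, hgt⟩

theorem pre_lexLt_iff (w : List A) {s t : ℕ → A} :
    lexLt (pre w s) (pre w t) ↔ lexLt s t := by
  constructor
  · rintro ⟨k, hag, hlt⟩
    have hk : w.length ≤ k := by
      by_contra hc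
      push_neg at hc
      simp only [pre, if_pos hc] at hlt
      exact lt_irrefl _ hlt
    have hlt' : s (k - w.length) < t (k - w.length) := by
      simpa only [pre, if_neg (not_lt.mpr hk)] using hlt
    refine ⟨k - w.length, fun i hi => ?_, hlt'⟩
    have h1 : i + w.length < k := by omega
    have := hag (i + w.length) h1
    simpa only [pre, if_neg (by omega : ¬ i + w.length < w.length),
      Nat.add_sub_cancel] using this
  · rintro ⟨k, hag, hlt⟩
    refine ⟨k + w.length, fun i hi => ?_, ?_⟩
    · by_cases hc : i < w.length
      · simp only [pre, if_pos hc]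
      · simp only [pre, if_neg hc]
        exact hag (i - w.length) (by omega)
    · simpa only [pre, if_neg (by omega : ¬ k + w.length < w.length),
        Nat.add_sub_cancel] using hlt

theorem pre_omegaPow (u : List A) : pre u (omegaPow u) = omegaPow u := by
  funext n
  simp only [pre, omegaPow]
  split
  · rename_i h
    rw [Nat.mod_eq_of_lt h]
  · rename_i h
    have hle : u.length ≤ n := not_lt.mp h
    congr 1
    conv_rhs => rw [← Nat.sub_add_cancel hle, Nat.add_mod_right]

theorem getD_append_left (u v : List A) {n : ℕ} (h : n < u.length) :
    (u ++ v).getD n default = u.getD n default := by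
  rw [List.getD_eq_getElem _ _ (by simp; omega), List.getD_eq_getElem _ _ h,
    List.getElem_append_left h]

theorem getD_append_right (u v : List A) {n : ℕ} (h : u.length ≤ n)
    (h2 : n < u.length + v.length) :
    (u ++ v).getD n default = v.getD (n - u.length) default := by
  rw [List.getD_eq_getElem _ _ (by simp; omega), List.getD_eq_getElem _ _ (by omega),
    List.getElem_append_right h]

/-- Rotation identity: `u · (vu)^ω = (uv)^ω`. -/
theorem pre_rotate (u v : List A) (hu : u ≠ []) (hv : v ≠ []) :
    pre u (omegaPow (v ++ u)) = omegaPow (u ++ v) := by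
  have hp : 0 < u.length := List.length_pos_iff.mpr hu
  have hq : 0 < v.length := List.length_pos_iff.mpr hv
  funext n
  simp only [pre, omegaPow, List.length_append]
  split
  · rename_i h
    rw [Nat.mod_eq_of_lt (by omega), getD_append_left u v h]
  · rename_i h
    have hle : u.length ≤ n := not_lt.mp h
    rw [Nat.add_comm v.length u.length]
    have hn : n % (u.length + v.length) =
        ((n - u.length) % (u.length + v.length) + u.length) % (u.length + v.length) := by
      conv_lhs => rw [← Nat.sub_add_cancel hle]
      conv_rhs => rw [Nat.add_mod, Nat.mod_mod_of_dvd _ dvd_rfl, ← Nat.add_mod]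
    set M := (n - u.length) % (u.length + v.length) with hM
    have hmlt : M < u.length + v.length := Nat.mod_lt _ (by omega)
    by_cases hc : M < v.length
    · have e1 : n % (u.length + v.length) = M + u.length := by
        rw [hn]
        exact Nat.mod_eq_of_lt (by omega)
      rw [e1, getD_append_right u v (show u.length ≤ M + u.length by omega) (by omega),
        getD_append_left v u hc]
      congr 1
      omega
    · push_neg at hc
      have e2 : n % (u.length + v.length) = M - v.length := by
        rw [hn, Nat.mod_eq_sub_mod (show M + u.length ≥ u.length + v.length by omega),
          show M + u.length - (u.length + v.length) = M - v.length from by omega]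
        exact Nat.mod_eq_of_lt (by omega)
      rw [e2, getD_append_left u v (show M - v.length < u.length by omega),
        getD_append_right v u hc (by omega)]

/-- If `u · s = s` then `s = u^ω`. -/
theorem eq_omegaPow_of_pre_eq {u : List A} (hu : u ≠ []) {s : ℕ → A}
    (h : pre u s = s) : s = omegaPow u := by
  have hp : 0 < u.length := List.length_pos_iff.mpr hu
  funext n
  induction n using Nat.strong_induction_on with
  | _ n ih =>
    by_cases hc : n < u.length
    · have := congrFun h n
      simp only [pre, if_pos hc] at this
      rw [← this, omegaPow, Nat.mod_eq_of_lt hc]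
    · have hle : u.length ≤ n := not_lt.mp hc
      have h1 := congrFun h n
      simp only [pre, if_neg hc] at h1
      rw [← h1, ih (n - u.length) (by omega), omegaPow, omegaPow]
      congr 1
      conv_rhs => rw [← Nat.sub_add_cancel hle, Nat.add_mod_right]

theorem iterate_pre_eq_omegaPow {u : List A} (s : ℕ → A) :
    ∀ n i, i < n * u.length → (pre u)^[n] s i = omegaPow u i := by
  intro n
  induction n with
  | zero => intro i hi; omega
  | succ n ih =>
    intro i hi
    rw [Function.iterate_succ_apply']
    by_cases hc : i < u.length
    · simp only [pre, if_pos hc]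
      rw [omegaPow, Nat.mod_eq_of_lt hc]
    · have hle : u.length ≤ i := not_lt.mp hc
      simp only [pre, if_neg hc]
      rw [ih (i - u.length) (by simp only [Nat.succ_mul] at hi; omega)]
      simp only [omegaPow]
      congr 1
      conv_rhs => rw [← Nat.sub_add_cancel hle, Nat.add_mod_right]

theorem iterate_chain_lt {u : List A} {s : ℕ → A} (h : lexLt (pre u s) s) :
    ∀ n, lexLt ((pre u)^[n + 1] s) s := by
  have step : ∀ n, lexLt ((pre u)^[n + 1] s) ((pre u)^[n] s) := by
    intro n
    induction n with
    | zero => simpa using h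
    | succ n ih =>
      have := (pre_lexLt_iff u).mpr ih
      rwa [← Function.iterate_succ_apply' (pre u) (n + 1) s,
        ← Function.iterate_succ_apply' (pre u) n s] at this
  intro n
  induction n with
  | zero => simpa using h
  | succ n ih => exact lexLt_trans (step (n + 1)) ih

theorem iterate_chain_gt {u : List A} {s : ℕ → A} (h : lexLt s (pre u s)) :
    ∀ n, lexLt s ((pre u)^[n + 1] s) := by
  have step : ∀ n, lexLt ((pre u)^[n] s) ((pre u)^[n + 1] s) := by
    intro n
    induction n with
    | zero => simpa using h
    | succ n ih =>
      have := (pre_lexLt_iff u).mpr ih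
      rwa [← Function.iterate_succ_apply' (pre u) (n + 1) s,
        ← Function.iterate_succ_apply' (pre u) n s] at this
  intro n
  induction n with
  | zero => simpa using h
  | succ n ih => exact lexLt_trans ih (step (n + 1))

/-- Key lemma: if `u · s < s` then `u^ω < s`. -/
theorem omegaPow_lt_of_pre_lt {u : List A} (hu : u ≠ []) {s : ℕ → A}
    (h : lexLt (pre u s) s) : lexLt (omegaPow u) s := by
  classical
  have hp : 0 < u.length := List.length_pos_iff.mpr hu
  have hne : omegaPow u ≠ s := by
    intro he
    rw [← he, pre_omegaPow, he] at h
    exact lexLt_irrefl s h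
  have hex : ∃ k, omegaPow u k ≠ s k := by
    by_contra hc
    push_neg at hc
    exact hne (funext hc)
  set k := Nat.find hex with hkdef
  have hmin : ∀ i < k, omegaPow u i = s i := fun i hi => not_not.mp (Nat.find_min hex hi)
  have hkn : k < (k + 1) * u.length := by
    calc k < k + 1 := Nat.lt_succ_self k
    _ = (k + 1) * 1 := (Nat.mul_one _).symm
    _ ≤ (k + 1) * u.length := Nat.mul_le_mul_left _ hp
  obtain ⟨m, hag, hlt⟩ := iterate_chain_lt h k
  rcases lt_trichotomy m k with hc | hc | hc
  · exfalso
    rw [iterate_pre_eq_omegaPow s (k + 1) m (by omega), hmin m hc] at hlt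
    exact lt_irrefl _ hlt
  · subst hc
    rw [iterate_pre_eq_omegaPow s (k + 1) k hkn] at hlt
    exact ⟨k, hmin, hlt⟩
  · exfalso
    have := hag k hc
    rw [iterate_pre_eq_omegaPow s (k + 1) k hkn] at this
    exact Nat.find_spec hex this

/-- Key lemma, dual: if `s < u · s` then `s < u^ω`. -/
theorem lt_omegaPow_of_lt_pre {u : List A} (hu : u ≠ []) {s : ℕ → A}
    (h : lexLt s (pre u s)) : lexLt s (omegaPow u) := by
  classical
  have hp : 0 < u.length := List.length_pos_iff.mpr hu
  have hne : s ≠ omegaPow u := by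
    intro he
    rw [he, pre_omegaPow, ← he] at h
    exact lexLt_irrefl s h
  have hex : ∃ k, s k ≠ omegaPow u k := by
    by_contra hc
    push_neg at hc
    exact hne (funext hc)
  set k := Nat.find hex with hkdef
  have hmin : ∀ i < k, s i = omegaPow u i := fun i hi => not_not.mp (Nat.find_min hex hi)
  have hkn : k < (k + 1) * u.length := by
    calc k < k + 1 := Nat.lt_succ_self k
    _ = (k + 1) * 1 := (Nat.mul_one _).symm
    _ ≤ (k + 1) * u.length := Nat.mul_le_mul_left _ hp
  obtain ⟨m, hag, hlt⟩ := iterate_chain_gt h k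
  rcases lt_trichotomy m k with hc | hc | hc
  · exfalso
    rw [iterate_pre_eq_omegaPow s (k + 1) m (by omega), ← hmin m hc] at hlt
    exact lt_irrefl _ hlt
  · subst hc
    rw [iterate_pre_eq_omegaPow s (k + 1) k hkn] at hlt
    exact ⟨k, hmin, hlt⟩
  · exfalso
    have := hag k hc
    rw [iterate_pre_eq_omegaPow s (k + 1) k hkn] at this
    exact Nat.find_spec hex this

theorem lex_of_getD : ∀ (k : ℕ) (x y : List A), k < x.length → k < y.length →
    (∀ i < k, x.getD i default = y.getD i default) →
    x.getD k default < y.getD k default → List.Lex (· < ·) x y := by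
  intro k
  induction k with
  | zero =>
    intro x y hx hy _ hlt
    match x, y with
    | a :: x', b :: y' =>
      simp only [List.getD_cons_zero] at hlt
      exact List.Lex.rel hlt
  | succ k ih =>
    intro x y hx hy hag hlt
    match x, y with
    | a :: x', b :: y' =>
      have hab : a = b := by
        have := hag 0 (Nat.succ_pos k)
        simpa using this
      subst hab
      refine List.Lex.cons (ih x' y' (by simpa using hx) (by simpa using hy)
        (fun i hi => ?_) (by simpa using hlt))
      have := hag (i + 1) (by omega)
      simpa using this

theorem getD_of_lex {x y : List A} (h : List.Lex (· < ·) x y)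
    (hl : x.length = y.length) :
    ∃ k, k < x.length ∧ (∀ i < k, x.getD i default = y.getD i default) ∧
      x.getD k default < y.getD k default := by
  induction h with
  | nil => simp at hl
  | @rel a l b l' hab =>
    exact ⟨0, by simp, fun i hi => (Nat.not_lt_zero i hi).elim, by simpa using hab⟩
  | @cons a l l' h ih =>
    obtain ⟨k, hk, hag, hlt⟩ := ih (by simpa using hl)
    refine ⟨k + 1, by simpa using hk, fun i hi => ?_, by simpa using hlt⟩
    match i with
    | 0 => simp
    | i + 1 => simpa using hag i (by omega)

/-- Equal-length comparison: `x^ω < y^ω ↔ x <lex y` when `|x| = |y|`. -/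
theorem omegaPow_lt_iff_lex_of_length_eq {x y : List A} (hx : x ≠ [])
    (hl : x.length = y.length) :
    lexLt (omegaPow x) (omegaPow y) ↔ List.Lex (· < ·) x y := by
  have hp : 0 < x.length := List.length_pos_iff.mpr hx
  constructor
  · rintro ⟨k, hag, hlt⟩
    simp only [omegaPow, ← hl] at hag hlt
    have hkL : k < x.length := by
      by_contra hc
      push_neg at hc
      have hmlt : k % x.length < k := lt_of_lt_of_le (Nat.mod_lt _ hp) hc
      have heq := hag (k % x.length) hmlt
      rw [Nat.mod_mod_of_dvd _ dvd_rfl] at heq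
      exact absurd heq (ne_of_lt hlt)
    rw [Nat.mod_eq_of_lt hkL] at hlt
    refine lex_of_getD k x y hkL (hl ▸ hkL) (fun i hi => ?_) hlt
    have := hag i hi
    rwa [Nat.mod_eq_of_lt (by omega)] at this
  · intro h
    obtain ⟨k, hk, hag, hlt⟩ := getD_of_lex h hl
    refine ⟨k, fun i hi => ?_, ?_⟩
    · simp only [omegaPow, ← hl, Nat.mod_eq_of_lt (show i < x.length by omega)]
      exact hag i hi
    · simp only [omegaPow, ← hl, Nat.mod_eq_of_lt hk]
      exact hlt

/-- Bridge: `(uv)^ω < (vu)^ω → u^ω < v^ω`. -/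
theorem bridge {u v : List A} (hu : u ≠ []) (hv : v ≠ [])
    (h : lexLt (omegaPow (u ++ v)) (omegaPow (v ++ u))) :
    lexLt (omegaPow u) (omegaPow v) := by
  have h1 : lexLt (pre u (omegaPow (u ++ v))) (omegaPow (u ++ v)) := by
    have := (pre_lexLt_iff u).mpr h
    rwa [pre_rotate u v hu hv] at this
  have h2 : lexLt (omegaPow (v ++ u)) (pre v (omegaPow (v ++ u))) := by
    have := (pre_lexLt_iff v).mpr h
    rwa [pre_rotate v u hv hu] at this
  exact lexLt_trans (lexLt_trans (omegaPow_lt_of_pre_lt hu h1) h)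
    (lt_omegaPow_of_lt_pre hv h2)

end OmegaPowAux

open OmegaPowAux in
/-- For nonempty finite words `u, v`, one has `u^ω < v^ω` iff `uv < vu`
in the lexicographic order on finite words. -/
theorem omegaPow_lt_iff_append_lex_lt (u v : List A) (hu : u ≠ []) (hv : v ≠ []) :
    lexLt (omegaPow u) (omegaPow v) ↔ List.Lex (· < ·) (u ++ v) (v ++ u) := by
  have huv : (u ++ v : List A) ≠ [] := by simp [hu]
  have hl : (u ++ v).length = (v ++ u).length := by
    simp [Nat.add_comm]
  constructor
  · intro h
    rcases eq_or_ne (omegaPow (u ++ v)) (omegaPow (v ++ u)) with he | hne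
    · exfalso
      have s1 : pre u (omegaPow (u ++ v)) = omegaPow (u ++ v) := by
        conv_lhs => rw [he]
        rw [pre_rotate u v hu hv]
      have s2 : pre v (omegaPow (v ++ u)) = omegaPow (v ++ u) := by
        conv_lhs => rw [← he]
        rw [pre_rotate v u hv hu]
      have e1 : omegaPow (u ++ v) = omegaPow u := eq_omegaPow_of_pre_eq hu s1
      have e2 : omegaPow (v ++ u) = omegaPow v := eq_omegaPow_of_pre_eq hv s2
      rw [← e1, ← e2, he] at h
      exact lexLt_irrefl _ h
    · rcases lexLt_total_of_ne hne with hlt | hgt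
      · exact (omegaPow_lt_iff_lex_of_length_eq huv hl).mp hlt
      · exact absurd (bridge hv hu hgt) (fun h' => lexLt_asymm h h')
  · intro h
    exact bridge hu hv ((omegaPow_lt_iff_lex_of_length_eq huv hl).mpr h)
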